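/- Let a, b ∈ ℝ, M > 0, and c < 0. Then the functional F^c_{a,b}[ρ] := a ∫_{ℝ²} log(1+|x|²) ρ dx − (b/M) ∬_{ℝ²×ℝ²} ρ(x)ρ(y) log|x−y| dx dy + c ∫_{ℝ²} ρ log(ρ/M) dx is unbounded from below on the set of measurable nonnegative functions ρ on ℝ² with ∫_{ℝ²} ρ dx = M: for every C ∈ ℝ there exists such a ρ, with all three defining integrals absolutely convergent, satisfying F^c_{a,b}[ρ] < C. -/

import Mathlib

open MeasureTheory Real

noncomputable section

abbrev R2 : Type := EuclideanSpace ℝ (Fin 2)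

/-- Admissibility of a density `ρ` of mass `M` on `ℝ²`. -/
def Admissible (M : ℝ) (ρ : R2 → ℝ) : Prop :=
  Measurable ρ ∧ (∀ x, 0 ≤ ρ x) ∧ Integrable ρ ∧ (∫ x : R2, ρ x) = M ∧
  Integrable (fun x : R2 => ρ x * Real.log (ρ x)) ∧
  Integrable (fun x : R2 => Real.log (1 + ‖x‖ ^ 2) * ρ x) ∧
  Integrable (fun p : R2 × R2 => ρ p.1 * ρ p.2 * Real.log ‖p.1 - p.2‖)

/-- The free energy functional with entropy coefficient `c`. -/
def FreeEnergyC (a b c M : ℝ) (ρ : R2 → ℝ) : ℝ :=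
  a * (∫ x : R2, Real.log (1 + ‖x‖ ^ 2) * ρ x) -
    (b / M) * (∫ p : R2 × R2, ρ p.1 * ρ p.2 * Real.log ‖p.1 - p.2‖) +
    c * ∫ x : R2, ρ x * Real.log (ρ x / M)

/-!
Put mass `m` uniformly on a disc of radius `s` about the origin and the remaining mass `M - m`
uniformly on a unit disc at distance `3`. As `s → 0` the entropy term equals
`2 c m log (1 / s)` up to a constant, the interaction term is at most
`4 |b| m² / M · log (1 / s)` up to a constant, and the confinement term stays bounded. Since
`c < 0`, a small `m` makes the coefficient of `log (1 / s)` negative. The singular kernel is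
handled through `|log t| ≤ log R + log⁺ t⁻¹` for `t ≤ R`, and `log⁺ ‖z‖⁻¹` is integrable on `ℝ²`.
-/

open Metric Set Filter Topology

theorem Real.posLog_add_posLog_inv (x : ℝ) : log⁺ x + log⁺ x⁻¹ = |Real.log x| := by
  rw [← Real.half_mul_log_add_log_abs, ← Real.half_mul_log_add_log_abs, Real.log_inv, abs_neg]
  ring

theorem Real.abs_log_le_log_add_posLog_inv {t R : ℝ} (ht : 0 ≤ t) (htR : t ≤ R) (hR : 1 ≤ R) :
    |Real.log t| ≤ Real.log R + log⁺ t⁻¹ := by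
  rw [← Real.posLog_add_posLog_inv, ← Real.posLog_eq_log (by rwa [abs_of_nonneg (by linarith)])]
  gcongr

theorem Real.posLog_inv_eq_neg_log {y : ℝ} (hy0 : 0 < y) (hy1 : y ≤ 1) :
    log⁺ y⁻¹ = -Real.log y := by
  rw [Real.posLog_eq_log (by rw [abs_inv, abs_of_pos hy0]; exact one_le_inv_iff₀.mpr ⟨hy0, hy1⟩),
    Real.log_inv]

theorem Real.posLog_inv_eq_zero {t : ℝ} (ht : 1 ≤ t) : log⁺ t⁻¹ = 0 := by
  rw [Real.posLog_eq_zero_iff, abs_inv, abs_of_pos (zero_lt_one.trans_le ht)]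
  exact inv_le_one_of_one_le₀ ht

theorem intervalIntegral.integral_neg_mul_log {r : ℝ} (hr : 0 ≤ r) :
    ∫ y in (0 : ℝ)..r, -(y * Real.log y) = r ^ 2 / 4 - r ^ 2 / 2 * Real.log r := by
  have hderiv : ∀ y ∈ Ioo 0 r,
      HasDerivAt (fun y => y ^ 2 / 4 - y / 2 * (y * Real.log y)) (-(y * Real.log y)) y := by
    intro y hy
    refine (((hasDerivAt_pow 2 y).div_const 4).sub (((hasDerivAt_id' y).div_const 2).mul
      ((hasDerivAt_id' y).mul (Real.hasDerivAt_log hy.1.ne')))).congr_deriv ?_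
    simp only [Pi.mul_apply]
    field_simp [hy.1.ne']
    ring
  rw [intervalIntegral.integral_eq_sub_of_hasDerivAt_of_le hr
    (by fun_prop (disch := exact Real.continuous_mul_log)) hderiv
    (Real.continuous_mul_log.neg.intervalIntegrable 0 r)]
  simp only [ne_eq, OfNat.ofNat_ne_zero, not_false_eq_true, zero_pow, zero_div, Real.log_zero,
    mul_zero, sub_self, sub_zero]
  ring

section ConvolutionIntegrand

variable {G : Type*} [AddGroup G] [MeasurableSpace G] [MeasurableAdd₂ G] [MeasurableNeg G]
  {μ : Measure G} [SFinite μ] [μ.IsAddRightInvariant] {f g : G → ℝ}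

theorem integrable_mul_comp_sub_prod (hf : Integrable f μ) (hg : Integrable g μ) :
    Integrable (fun p => f p.2 * g (p.1 - p.2)) (μ.prod μ) :=
  hf.convolution_integrand (ContinuousLinearMap.mul ℝ ℝ) hg

theorem integral_mul_comp_sub_prod (hf : Integrable f μ) (hg : Integrable g μ) :
    ∫ p, f p.2 * g (p.1 - p.2) ∂μ.prod μ = (∫ x, f x ∂μ) * ∫ x, g x ∂μ := by
  have hconv := integral_convolution (ContinuousLinearMap.mul ℝ ℝ) hf hg
  simp only [convolution_def, ContinuousLinearMap.mul_apply'] at hconv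
  rw [integral_prod _ (integrable_mul_comp_sub_prod hf hg)]
  exact hconv

end ConvolutionIntegrand

theorem comp_indicator_add_indicator {α : Type*} {A B : Set α} (hAB : Disjoint A B) {G : ℝ → ℝ}
    (hG : G 0 = 0) (h k : ℝ) (x : α) :
    G (A.indicator (fun _ => h) x + B.indicator (fun _ => k) x)
      = A.indicator (fun _ => G h) x + B.indicator (fun _ => G k) x := by
  by_cases hxA : x ∈ A
  · simp [hxA, hAB.notMem_of_mem_left hxA]
  · by_cases hxB : x ∈ B <;> simp [hxA, hxB, hG]

theorem volume_real_ball_R2 (x : R2) {r : ℝ} (hr : 0 ≤ r) :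
    volume.real (ball x r) = π * r ^ 2 := by
  rw [measureReal_def, EuclideanSpace.volume_ball_fin_two, ENNReal.toReal_mul,
    ENNReal.toReal_pow, ENNReal.toReal_ofReal hr, ENNReal.toReal_ofReal pi_pos.le, mul_comm]

theorem integrable_indicator_ball_const (x : R2) (r c : ℝ) :
    Integrable ((ball x r).indicator fun _ => c) :=
  (integrable_indicator_iff measurableSet_ball).mpr (integrableOn_const measure_ball_lt_top.ne)

theorem integral_indicator_ball_add_indicator_ball (x y : R2) {r t : ℝ} (hr : 0 ≤ r)
    (ht : 0 ≤ t) (h k : ℝ) :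
    ∫ z : R2, ((ball x r).indicator (fun _ => h) z + (ball y t).indicator (fun _ => k) z)
      = h * (π * r ^ 2) + k * (π * t ^ 2) := by
  rw [integral_add (integrable_indicator_ball_const x r h) (integrable_indicator_ball_const y t k),
    integral_indicator_const _ measurableSet_ball, integral_indicator_const _ measurableSet_ball,
    volume_real_ball_R2 x hr, volume_real_ball_R2 y ht, smul_eq_mul, smul_eq_mul, mul_comm h,
    mul_comm k]

theorem integral_fun_norm_R2 (f : ℝ → ℝ) :
    ∫ z : R2, f ‖z‖ = 2 * π * ∫ y in Ioi 0, y * f y := by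
  rw [integral_fun_norm_addHaar volume f, finrank_euclideanSpace_fin,
    volume_real_ball_R2 0 zero_le_one]
  simp only [one_pow, mul_one, Nat.add_one_sub_one, pow_one, smul_eq_mul, nsmul_eq_mul,
    Nat.cast_ofNat]
  ring

theorem integrable_fun_norm_R2 {f : ℝ → ℝ} :
    Integrable (fun z : R2 => f ‖z‖) ↔ IntegrableOn (fun y => y * f y) (Ioi 0) := by
  rw [integrable_fun_norm_addHaar volume, finrank_euclideanSpace_fin]
  simp

theorem integrable_posLog_inv_norm : Integrable (fun z : R2 => log⁺ ‖z‖⁻¹) := by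
  rw [integrable_fun_norm_R2 (f := fun y => log⁺ y⁻¹), ← Ioc_union_Ioi_eq_Ioi zero_le_one]
  refine IntegrableOn.union ?_ ?_
  · refine (integrableOn_congr_fun (fun y hy => ?_) measurableSet_Ioc).mpr
      ((Real.continuous_mul_log.neg.integrableOn_Icc (a := 0) (b := 1)).mono_set
        Ioc_subset_Icc_self)
    simp only [Real.posLog_inv_eq_neg_log hy.1 hy.2, mul_neg, Pi.neg_apply]
  · refine (integrableOn_congr_fun (fun y hy => ?_) measurableSet_Ioi).mpr integrableOn_zero
    rw [Real.posLog_inv_eq_zero (mem_Ioi.mp hy).le, mul_zero]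

theorem integral_indicator_ball_posLog_inv_norm {r : ℝ} (hr0 : 0 ≤ r) (hr1 : r ≤ 1) :
    ∫ z : R2, (ball 0 r).indicator (fun z => log⁺ ‖z‖⁻¹) z
      = π * (r ^ 2 / 2 - r ^ 2 * Real.log r) := by
  have hball : (ball (0 : R2) r).indicator (fun z => log⁺ ‖z‖⁻¹)
      = fun z => (Iio r).indicator (fun y => log⁺ y⁻¹) ‖z‖ := by
    ext z
    simp [Set.indicator]
  have hmul : (fun y => y * (Iio r).indicator (fun y => log⁺ y⁻¹) y)
      = (Iio r).indicator (fun y => y * log⁺ y⁻¹) := by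
    ext y
    by_cases hy : y < r <;> simp [hy]
  have hradial : ∫ y in Ioi 0, y * (Iio r).indicator (fun y => log⁺ y⁻¹) y
      = ∫ y in (0 : ℝ)..r, -(y * Real.log y) := by
    rw [hmul, setIntegral_indicator measurableSet_Iio, Ioi_inter_Iio,
      intervalIntegral.integral_of_le hr0, integral_Ioc_eq_integral_Ioo]
    refine setIntegral_congr_fun measurableSet_Ioo fun y hy => ?_
    simp only [Real.posLog_inv_eq_neg_log hy.1 (hy.2.le.trans hr1), mul_neg]
  rw [hball, integral_fun_norm_R2, hradial, intervalIntegral.integral_neg_mul_log hr0]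
  ring

section CompactSupport

variable {E : Type*} [NormedAddCommGroup E] {ρ : E → ℝ} {R : ℝ}

theorem norm_log_one_add_sq_mul_le (hρ0 : ∀ x, 0 ≤ ρ x) (hsupp : ∀ x, ρ x ≠ 0 → ‖x‖ < R)
    (x : E) : ‖Real.log (1 + ‖x‖ ^ 2) * ρ x‖ ≤ Real.log (1 + R ^ 2) * ρ x := by
  rw [norm_mul, Real.norm_of_nonneg (hρ0 x),
    Real.norm_of_nonneg (Real.log_nonneg (by nlinarith [norm_nonneg x]))]
  by_cases hx : ρ x = 0
  · simp [hx]
  · have hxR : ‖x‖ ^ 2 ≤ R ^ 2 := pow_le_pow_left₀ (norm_nonneg x) (hsupp x hx).le 2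
    exact mul_le_mul_of_nonneg_right (Real.log_le_log (by positivity) (by linarith)) (hρ0 x)

theorem mul_mul_abs_log_norm_sub_le (hρ0 : ∀ x, 0 ≤ ρ x) (hsupp : ∀ x, ρ x ≠ 0 → ‖x‖ < R)
    (hR : 1 / 2 ≤ R) (x y : E) :
    ρ x * ρ y * |Real.log ‖x - y‖|
      ≤ Real.log (2 * R) * (ρ x * ρ y) + ρ x * ρ y * log⁺ ‖x - y‖⁻¹ := by
  by_cases hxy : ρ x = 0 ∨ ρ y = 0
  · rcases hxy with h | h <;> simp [h]
  obtain ⟨hx, hy⟩ := not_or.mp hxy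
  have hnorm : ‖x - y‖ ≤ 2 * R := by
    linarith [norm_sub_le x y, hsupp x hx, hsupp y hy]
  have hlog := Real.abs_log_le_log_add_posLog_inv (norm_nonneg _) hnorm (by linarith)
  have hρρ : 0 ≤ ρ x * ρ y := mul_nonneg (hρ0 x) (hρ0 y)
  nlinarith

variable [MeasurableSpace E] {μ : Measure E}

theorem integrable_log_one_add_sq_mul [BorelSpace E] (hρm : Measurable ρ) (hρ0 : ∀ x, 0 ≤ ρ x)
    (hρ : Integrable ρ μ) (hsupp : ∀ x, ρ x ≠ 0 → ‖x‖ < R) :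
    Integrable (fun x => Real.log (1 + ‖x‖ ^ 2) * ρ x) μ :=
  (hρ.const_mul _).mono' (by fun_prop)
    (Eventually.of_forall (norm_log_one_add_sq_mul_le hρ0 hsupp))

theorem abs_integral_log_one_add_sq_mul_le (hρ0 : ∀ x, 0 ≤ ρ x) (hρ : Integrable ρ μ)
    (hsupp : ∀ x, ρ x ≠ 0 → ‖x‖ < R) :
    |∫ x, Real.log (1 + ‖x‖ ^ 2) * ρ x ∂μ| ≤ Real.log (1 + R ^ 2) * ∫ x, ρ x ∂μ := by
  rw [← integral_const_mul, ← Real.norm_eq_abs]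
  exact norm_integral_le_of_norm_le (hρ.const_mul _)
    (Eventually.of_forall (norm_log_one_add_sq_mul_le hρ0 hsupp))

variable {Ψ : E × E → ℝ}

theorem integrable_mul_mul_log_norm_sub [BorelSpace E] [SecondCountableTopology E]
    (hρm : Measurable ρ) (hρ0 : ∀ x, 0 ≤ ρ x) (hρ : Integrable ρ μ)
    (hsupp : ∀ x, ρ x ≠ 0 → ‖x‖ < R) (hR : 1 / 2 ≤ R) (hΨ : Integrable Ψ (μ.prod μ))
    (hle : ∀ x y, ρ x * ρ y * log⁺ ‖x - y‖⁻¹ ≤ Ψ (x, y)) :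
    Integrable (fun p : E × E => ρ p.1 * ρ p.2 * Real.log ‖p.1 - p.2‖) (μ.prod μ) := by
  refine Integrable.mono' (((hρ.mul_prod hρ).const_mul (Real.log (2 * R))).add hΨ)
    (by fun_prop) (Eventually.of_forall fun p => ?_)
  simp only [Pi.add_apply]
  rw [norm_mul, Real.norm_of_nonneg (mul_nonneg (hρ0 _) (hρ0 _)), Real.norm_eq_abs]
  linarith [mul_mul_abs_log_norm_sub_le hρ0 hsupp hR p.1 p.2, hle p.1 p.2]

theorem abs_integral_mul_mul_log_norm_sub_le [SFinite μ] (hρ0 : ∀ x, 0 ≤ ρ x)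
    (hρ : Integrable ρ μ) (hsupp : ∀ x, ρ x ≠ 0 → ‖x‖ < R) (hR : 1 / 2 ≤ R)
    (hΨ : Integrable Ψ (μ.prod μ)) (hle : ∀ x y, ρ x * ρ y * log⁺ ‖x - y‖⁻¹ ≤ Ψ (x, y)) :
    |∫ p, ρ p.1 * ρ p.2 * Real.log ‖p.1 - p.2‖ ∂μ.prod μ|
      ≤ Real.log (2 * R) * (∫ x, ρ x ∂μ) ^ 2 + ∫ p, Ψ p ∂μ.prod μ := by
  have hρρ := hρ.mul_prod hρ
  calc |∫ p, ρ p.1 * ρ p.2 * Real.log ‖p.1 - p.2‖ ∂μ.prod μ|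
      ≤ ∫ p, (Real.log (2 * R) * (ρ p.1 * ρ p.2) + Ψ p) ∂μ.prod μ := by
        refine abs_integral_le_integral_abs.trans (integral_mono_of_nonneg
          (Eventually.of_forall fun _ => abs_nonneg _) ((hρρ.const_mul _).add hΨ)
          (Eventually.of_forall fun p => ?_))
        dsimp only
        rw [abs_mul, abs_of_nonneg (mul_nonneg (hρ0 _) (hρ0 _))]
        linarith [mul_mul_abs_log_norm_sub_le hρ0 hsupp hR p.1 p.2, hle p.1 p.2]
    _ = Real.log (2 * R) * (∫ x, ρ x ∂μ) ^ 2 + ∫ p, Ψ p ∂μ.prod μ := by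
        rw [integral_add (hρρ.const_mul _) hΨ, integral_const_mul, integral_prod_mul, sq]

end CompactSupport

def bumpCenter : R2 := EuclideanSpace.single 0 3

theorem norm_bumpCenter : ‖bumpCenter‖ = 3 := by
  simp [bumpCenter]

theorem one_le_dist_of_mem_ball_zero_of_mem_ball_bumpCenter {s : ℝ} (hs : s ≤ 1 / 2) {x y : R2}
    (hx : x ∈ ball 0 s) (hy : y ∈ ball bumpCenter 1) : 1 ≤ dist x y := by
  rw [mem_ball] at hx hy
  have := dist_triangle4 0 x y bumpCenter
  rw [dist_zero_left, norm_bumpCenter, dist_comm 0 x] at this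
  linarith

theorem disjoint_ball_zero_ball_bumpCenter {s : ℝ} (hs : s ≤ 1 / 2) :
    Disjoint (ball (0 : R2) s) (ball bumpCenter 1) :=
  Set.disjoint_left.mpr fun _ hx hx' =>
    absurd (one_le_dist_of_mem_ball_zero_of_mem_ball_bumpCenter hs hx hx') (by simp)

theorem ball_bumpCenter_subset : ball bumpCenter 1 ⊆ ball (0 : R2) 4 :=
  ball_subset_ball' (by rw [dist_zero_right, norm_bumpCenter]; norm_num)

def twoBump (m M s : ℝ) : R2 → ℝ :=
  fun x => (ball 0 s).indicator (fun _ => m / (π * s ^ 2)) x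
    + (ball bumpCenter 1).indicator (fun _ => (M - m) / π) x

/-- Points of different discs are at distance at least `1`, where `log⁺ ‖·‖⁻¹` vanishes, and
points of the small disc are at distance less than `2 s`. -/
def twoBumpInteractionBound (m M s : ℝ) (p : R2 × R2) : ℝ :=
  (ball 0 s).indicator (fun _ => (m / (π * s ^ 2)) ^ 2) p.2
      * (ball 0 (2 * s)).indicator (fun z => log⁺ ‖z‖⁻¹) (p.1 - p.2)
    + (ball bumpCenter 1).indicator (fun _ => ((M - m) / π) ^ 2) p.2 * log⁺ ‖p.1 - p.2‖⁻¹

section TwoBump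

variable {m M s : ℝ}

theorem measurable_twoBump : Measurable (twoBump m M s) :=
  (measurable_const.indicator measurableSet_ball).add
    (measurable_const.indicator measurableSet_ball)

theorem integrable_twoBump : Integrable (twoBump m M s) :=
  (integrable_indicator_ball_const _ _ _).add (integrable_indicator_ball_const _ _ _)

theorem twoBump_nonneg (hm : 0 ≤ m) (hmM : m ≤ M) (x : R2) : 0 ≤ twoBump m M s x :=
  add_nonneg (Set.indicator_nonneg (fun _ _ => by positivity) x)
    (Set.indicator_nonneg (fun _ _ => div_nonneg (by linarith) pi_pos.le) x)

theorem norm_lt_four_of_twoBump_ne_zero (hs : s ≤ 1 / 2) {x : R2} (hx : twoBump m M s x ≠ 0) :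
    ‖x‖ < 4 := by
  rw [← mem_ball_zero_iff]
  by_contra hx4
  have hxA : x ∉ ball 0 s := fun h => hx4 (ball_subset_ball (by linarith) h)
  have hxB : x ∉ ball bumpCenter 1 := fun h => hx4 (ball_bumpCenter_subset h)
  simp [twoBump, hxA, hxB] at hx

theorem integral_twoBump (hs : 0 < s) : ∫ x, twoBump m M s x = M := by
  unfold twoBump
  rw [integral_indicator_ball_add_indicator_ball _ _ hs.le zero_le_one]
  field_simp
  ring

theorem comp_twoBump (hs : s ≤ 1 / 2) {G : ℝ → ℝ} (hG : G 0 = 0) (x : R2) :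
    G (twoBump m M s x) = (ball 0 s).indicator (fun _ => G (m / (π * s ^ 2))) x
      + (ball bumpCenter 1).indicator (fun _ => G ((M - m) / π)) x :=
  comp_indicator_add_indicator (disjoint_ball_zero_ball_bumpCenter hs) hG _ _ x

theorem integrable_twoBump_mul_log (hs : s ≤ 1 / 2) :
    Integrable fun x => twoBump m M s x * Real.log (twoBump m M s x) := by
  simp_rw [comp_twoBump hs (G := fun t => t * Real.log t) (by simp)]
  exact (integrable_indicator_ball_const _ _ _).add (integrable_indicator_ball_const _ _ _)

theorem integral_twoBump_mul_log_div (hm : m ≠ 0) (hM : M ≠ 0) (hs0 : 0 < s) (hs : s ≤ 1 / 2) :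
    ∫ x, twoBump m M s x * Real.log (twoBump m M s x / M)
      = m * Real.log (m / (π * M)) - 2 * m * Real.log s
        + (M - m) * Real.log ((M - m) / (π * M)) := by
  simp_rw [comp_twoBump hs (G := fun t => t * Real.log (t / M)) (by simp)]
  rw [integral_indicator_ball_add_indicator_ball _ _ hs0.le zero_le_one,
    show m / (π * s ^ 2) / M = m / (π * M) / s ^ 2 by ring,
    Real.log_div (by positivity) (by positivity), Real.log_pow]
  field_simp
  ring

theorem twoBump_mul_twoBump_mul_posLog_le (hmM : m ≤ M) (hs : s ≤ 1 / 2) (x y : R2) :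
    twoBump m M s x * twoBump m M s y * log⁺ ‖x - y‖⁻¹ ≤ twoBumpInteractionBound m M s (x, y) := by
  have hL : 0 ≤ log⁺ ‖x - y‖⁻¹ := Real.posLog_nonneg
  have hk : 0 ≤ (M - m) / π := div_nonneg (by linarith) pi_pos.le
  have hsmall : 0 ≤ (ball 0 s).indicator (fun _ => (m / (π * s ^ 2)) ^ 2) y
      * (ball 0 (2 * s)).indicator (fun z => log⁺ ‖z‖⁻¹) (x - y) :=
    mul_nonneg (Set.indicator_nonneg (fun _ _ => sq_nonneg _) _)
      (Set.indicator_nonneg (fun _ _ => Real.posLog_nonneg) _)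
  unfold twoBumpInteractionBound
  by_cases hxy : 1 ≤ dist x y
  · rw [Real.posLog_inv_eq_zero (dist_eq_norm x y ▸ hxy)]
    simpa using hsmall
  by_cases hyA : y ∈ ball 0 s
  · have hyB : y ∉ ball bumpCenter 1 :=
      (disjoint_ball_zero_ball_bumpCenter hs).notMem_of_mem_left hyA
    have hxB : x ∉ ball bumpCenter 1 := fun hxB => hxy
      (dist_comm x y ▸ one_le_dist_of_mem_ball_zero_of_mem_ball_bumpCenter hs hyA hxB)
    by_cases hxA : x ∈ ball 0 s
    · have hxy2s : x - y ∈ ball 0 (2 * s) := by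
        rw [mem_ball_zero_iff, ← dist_eq_norm]
        rw [mem_ball_zero_iff] at hxA hyA
        linarith [dist_le_norm_add_norm x y]
      simp [twoBump, hxA, hyA, hxB, hyB, hxy2s, sq]
    · simpa [twoBump, hxA, hxB] using add_nonneg hsmall
        (mul_nonneg (Set.indicator_nonneg (fun _ _ => sq_nonneg _) _) hL)
  by_cases hyB : y ∈ ball bumpCenter 1
  · have hxA : x ∉ ball 0 s := fun hxA => hxy
      (one_le_dist_of_mem_ball_zero_of_mem_ball_bumpCenter hs hxA hyB)
    have hρx : twoBump m M s x ≤ (M - m) / π := by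
      by_cases hxB : x ∈ ball bumpCenter 1 <;> simp [twoBump, hxA, hxB, hk]
    have hρy : twoBump m M s y = (M - m) / π := by simp [twoBump, hyA, hyB]
    rw [hρy, Set.indicator_of_notMem hyA, Set.indicator_of_mem hyB, zero_mul, zero_add, sq]
    gcongr
  · simp [twoBump, hyA, hyB]

theorem integrable_twoBumpInteractionBound :
    Integrable (twoBumpInteractionBound m M s) (volume.prod volume) :=
  (integrable_mul_comp_sub_prod (integrable_indicator_ball_const _ _ _)
      (integrable_posLog_inv_norm.indicator measurableSet_ball)).add
    (integrable_mul_comp_sub_prod (integrable_indicator_ball_const _ _ _)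
      integrable_posLog_inv_norm)

theorem integral_twoBumpInteractionBound (hs0 : 0 < s) (hs : s ≤ 1 / 2) :
    ∫ p, twoBumpInteractionBound m M s p ∂(volume.prod volume)
      = m ^ 2 * (2 - 4 * Real.log 2 - 4 * Real.log s)
        + (M - m) ^ 2 / π * ∫ z : R2, log⁺ ‖z‖⁻¹ := by
  have hfA := integrable_indicator_ball_const 0 s ((m / (π * s ^ 2)) ^ 2)
  have hgA := integrable_posLog_inv_norm.indicator (measurableSet_ball (x := 0) (ε := 2 * s))
  have hfB := integrable_indicator_ball_const bumpCenter 1 (((M - m) / π) ^ 2)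
  unfold twoBumpInteractionBound
  rw [integral_add (integrable_mul_comp_sub_prod hfA hgA)
      (integrable_mul_comp_sub_prod hfB integrable_posLog_inv_norm),
    integral_mul_comp_sub_prod hfA hgA, integral_mul_comp_sub_prod hfB integrable_posLog_inv_norm,
    integral_indicator_ball_posLog_inv_norm (by positivity) (by linarith),
    integral_indicator_const _ measurableSet_ball, integral_indicator_const _ measurableSet_ball,
    volume_real_ball_R2 _ hs0.le, volume_real_ball_R2 _ zero_le_one,
    Real.log_mul two_ne_zero hs0.ne', smul_eq_mul, smul_eq_mul]
  field_simp
  ring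

theorem admissible_twoBump (hm : 0 ≤ m) (hmM : m ≤ M) (hs0 : 0 < s) (hs : s ≤ 1 / 2) :
    Admissible M (twoBump m M s) := by
  have hsupp : ∀ x, twoBump m M s x ≠ 0 → ‖x‖ < 4 := fun _ => norm_lt_four_of_twoBump_ne_zero hs
  refine ⟨measurable_twoBump, twoBump_nonneg hm hmM, integrable_twoBump, integral_twoBump hs0,
    integrable_twoBump_mul_log hs,
    integrable_log_one_add_sq_mul measurable_twoBump (twoBump_nonneg hm hmM) integrable_twoBump
      hsupp, ?_⟩
  rw [Measure.volume_eq_prod]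
  exact integrable_mul_mul_log_norm_sub measurable_twoBump (twoBump_nonneg hm hmM)
    integrable_twoBump hsupp (by norm_num) integrable_twoBumpInteractionBound
    (twoBump_mul_twoBump_mul_posLog_le hmM hs)

end TwoBump

theorem exists_freeEnergyC_twoBump_le (a b c : ℝ) {m M : ℝ} (hM : 0 < M) (hm : 0 < m)
    (hmM : m ≤ M) :
    ∃ K, ∀ s, 0 < s → s ≤ 1 / 2 → FreeEnergyC a b c M (twoBump m M s)
      ≤ K + (4 * |b| * m ^ 2 / M + 2 * c * m) * -Real.log s := by
  refine ⟨|a| * (Real.log (1 + 4 ^ 2) * M)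
      + |b| / M * (Real.log (2 * 4) * M ^ 2 + m ^ 2 * (2 - 4 * Real.log 2)
        + (M - m) ^ 2 / π * ∫ z : R2, log⁺ ‖z‖⁻¹)
      + c * (m * Real.log (m / (π * M)) + (M - m) * Real.log ((M - m) / (π * M))),
    fun s hs0 hs => ?_⟩
  have hsupp : ∀ x, twoBump m M s x ≠ 0 → ‖x‖ < 4 := fun _ => norm_lt_four_of_twoBump_ne_zero hs
  have hconfine := abs_integral_log_one_add_sq_mul_le (μ := volume) (twoBump_nonneg hm.le hmM)
    integrable_twoBump hsupp
  have hinter := abs_integral_mul_mul_log_norm_sub_le (μ := volume) (twoBump_nonneg hm.le hmM)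
    integrable_twoBump hsupp (by norm_num) integrable_twoBumpInteractionBound
    (twoBump_mul_twoBump_mul_posLog_le hmM hs)
  rw [integral_twoBump hs0] at hconfine hinter
  rw [integral_twoBumpInteractionBound hs0 hs, ← Measure.volume_eq_prod] at hinter
  have hconfine' : a * ∫ x, Real.log (1 + ‖x‖ ^ 2) * twoBump m M s x
      ≤ |a| * (Real.log (1 + 4 ^ 2) * M) :=
    (le_abs_self _).trans (by rw [abs_mul]; gcongr)
  have hinter' : -(b / M * ∫ p : R2 × R2,
        twoBump m M s p.1 * twoBump m M s p.2 * Real.log ‖p.1 - p.2‖)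
      ≤ |b| / M * (Real.log (2 * 4) * M ^ 2 + (m ^ 2 * (2 - 4 * Real.log 2 - 4 * Real.log s)
        + (M - m) ^ 2 / π * ∫ z : R2, log⁺ ‖z‖⁻¹)) :=
    (neg_le_abs _).trans (by rw [abs_mul, abs_div, abs_of_pos hM]; gcongr)
  rw [FreeEnergyC, integral_twoBump_mul_log_div hm.ne' hM.ne' hs0 hs]
  linear_combination hconfine' + hinter'

theorem exists_mass_coeff_neg {b c M : ℝ} (hM : 0 < M) (hc : c < 0) :
    ∃ m, 0 < m ∧ m ≤ M ∧ 4 * |b| * m ^ 2 / M + 2 * c * m < 0 := by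
  have hd : 0 < 2 * |b| - c := by linarith [abs_nonneg b]
  have hm : 0 < -c * M / (2 * |b| - c) := div_pos (mul_pos (neg_pos.mpr hc) hM) hd
  refine ⟨-c * M / (2 * |b| - c), hm, ?_, ?_⟩
  · rw [div_le_iff₀ hd]
    nlinarith [abs_nonneg b]
  · have key : 4 * |b| * (-c * M / (2 * |b| - c)) ^ 2 / M + 2 * c * (-c * M / (2 * |b| - c))
        = -c * M / (2 * |b| - c) * (-2 * c ^ 2 / (2 * |b| - c)) := by
      field_simp
      ring
    rw [key]
    exact mul_neg_of_pos_of_neg hm (div_neg_of_neg_of_pos (by nlinarith) hd)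

theorem stmt_11 (a b c M : ℝ) (hM : 0 < M) (hc : c < 0) :
    ∀ C : ℝ, ∃ ρ : R2 → ℝ, Admissible M ρ ∧ FreeEnergyC a b c M ρ < C := by
  intro C
  obtain ⟨m, hm, hmM, hcoeff⟩ := exists_mass_coeff_neg (b := b) hM hc
  obtain ⟨K, hK⟩ := exists_freeEnergyC_twoBump_le a b c hM hm hmM
  have hlim : Tendsto (fun s => K + (4 * |b| * m ^ 2 / M + 2 * c * m) * -Real.log s)
      (𝓝[>] 0) atBot :=
    tendsto_atBot_add_const_left _ K <| (tendsto_neg_atBot_atTop.comp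
      Real.tendsto_log_nhdsGT_zero).const_mul_atTop_of_neg hcoeff
  obtain ⟨s, hsC, hs0, hs⟩ :=
    ((hlim.eventually_lt_atBot C).and (Ioc_mem_nhdsGT (by norm_num : (0 : ℝ) < 1 / 2))).exists
  exact ⟨twoBump m M s, admissible_twoBump hm.le hmM hs0 hs, (hK s hs0 hs).trans_lt hsC⟩
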